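/- For 1 ≤ k < n with 2k ≠ n, the subgroup U(k) × U(n-k) of block-diagonal unitary matrices is self-normalizing in U(n). -/

import Mathlib

/-!
`U(k) × U(n-k)` is the centraliser of the involution `D = diag(1_k, -1_{n-k})`. If `g` normalises
it, then `m = g D g⁻¹` commutes with that whole centraliser; testing `m` against diagonal sign
matrices and against transpositions inside a block shows `m = diag(a·1_k, b·1_{n-k})`. Being an
involution with the trace `k - (n-k)` of `D`, and `k ≠ n - k`, it must be `D` itself, so `g`
commutes with `D`.
-/

open Matrix

/-- The block-diagonal predicate `diag(A, B)` with `A ∈ U(k)`, `B ∈ U(n-k)`. -/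
def IsBlockDiag (n k : ℕ) (A : Matrix (Fin n) (Fin n) ℂ) : Prop :=
  ∀ i j : Fin n, (((i : ℕ) < k ∧ (j : ℕ) ≥ k) ∨ ((i : ℕ) ≥ k ∧ (j : ℕ) < k)) → A i j = 0

open Finset

section Group

variable {G : Type*} [Group G] {d g : G}

theorem commute_conj_of_forall_commute_iff (hg : ∀ h, Commute d h ↔ Commute d (g * h * g⁻¹))
    {h : G} (hh : Commute d h) : Commute (g * d * g⁻¹) h := by
  have : Commute d (g⁻¹ * h * g) := (hg _).2 (by simpa [mul_assoc] using hh)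
  simpa [mul_assoc] using (Commute.conj_iff g).2 this

theorem commute_iff_commute_conj_of_commute (hg : Commute d g) (h : G) :
    Commute d h ↔ Commute d (g * h * g⁻¹) := by
  have hconj : g * d * g⁻¹ = d := by rw [← hg.eq, mul_inv_cancel_right]
  rw [← Commute.conj_iff g, hconj]

end Group

theorem eq_one_and_eq_neg_one_of_mul_add_mul_eq_sub {K : Type*} [Field K] [CharZero K]
    {s t : ℕ} (hs : s ≠ 0) (ht : t ≠ 0) (hst : s ≠ t) {a b : K} (ha : a * a = 1) (hb : b * b = 1)
    (h : s * a + t * b = s - t) : a = 1 ∧ b = -1 := by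
  rcases mul_self_eq_one_iff.1 ha with rfl | rfl <;> rcases mul_self_eq_one_iff.1 hb with rfl | rfl
  · exact absurd (by exact_mod_cast (by linear_combination h / 2 : (t : K) = 0)) ht
  · exact ⟨rfl, rfl⟩
  · exact absurd (by exact_mod_cast (by linear_combination -h / 2 : (s : K) = t)) hst
  · exact absurd (by exact_mod_cast (by linear_combination -h / 2 : (s : K) = 0)) hs

theorem trace_diagonal_ite {ι K : Type*} [Fintype ι] [DecidableEq ι] [Semiring K]
    (p : ι → Prop) [DecidablePred p] (a b : K) :
    trace (diagonal fun i => if p i then a else b) = #{i | p i} * a + #{i | ¬ p i} * b := by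
  rw [trace_diagonal, sum_ite, sum_const, sum_const, nsmul_eq_mul, nsmul_eq_mul]

variable {ι : Type*} [DecidableEq ι]

section Sign

variable (p : ι → Prop) [DecidablePred p]

def signDiagonal : Matrix ι ι ℂ := diagonal fun i => if p i then 1 else -1

theorem star_signDiagonal : star (signDiagonal p) = signDiagonal p := by
  rw [signDiagonal, star_eq_conjTranspose, diagonal_conjTranspose]
  congr 1
  funext i
  by_cases hi : p i <;> simp [hi]

variable [Fintype ι]

theorem signDiagonal_mul_self : signDiagonal p * signDiagonal p = 1 := by
  rw [signDiagonal, diagonal_mul_diagonal, ← diagonal_one]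
  congr 1
  funext i
  by_cases hi : p i <;> simp [hi]

def blockSign : unitaryGroup ι ℂ :=
  ⟨signDiagonal p, by rw [mem_unitaryGroup_iff, star_signDiagonal, signDiagonal_mul_self]⟩

theorem blockSign_mul_self : blockSign p * blockSign p = 1 :=
  Subtype.ext (signDiagonal_mul_self p)

theorem commute_signDiagonal_iff (A : Matrix ι ι ℂ) :
    Commute (signDiagonal p) A ↔ ∀ i j, (p i ↔ ¬ p j) → A i j = 0 := by
  rw [Commute, SemiconjBy, ← Matrix.ext_iff]
  simp only [signDiagonal, diagonal_mul, mul_diagonal]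
  refine forall₂_congr fun i j => ?_
  by_cases hi : p i <;> by_cases hj : p j <;> simp [hi, hj, self_eq_neg, neg_eq_self]

theorem commute_signDiagonal_signDiagonal (q : ι → Prop) [DecidablePred q] :
    Commute (signDiagonal p) (signDiagonal q) := by
  rw [commute_signDiagonal_iff]
  intro i j hij
  rw [signDiagonal, diagonal_apply_ne]
  rintro rfl
  tauto

theorem commute_signDiagonal_swap {i j : ι} (hij : p i ↔ p j) :
    Commute (signDiagonal p) (swap ℂ i j) := by
  rw [commute_signDiagonal_iff]
  intro a b hab
  simp only [swap, PEquiv.toMatrix_apply, Equiv.toPEquiv_apply, Option.mem_def, Option.some.injEq,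
    ite_eq_right_iff, one_ne_zero, imp_false, Equiv.swap_apply_def]
  grind

theorem commute_blockSign_iff (h : unitaryGroup ι ℂ) :
    Commute (blockSign p) h ↔ Commute (signDiagonal p) (h : Matrix ι ι ℂ) :=
  Submonoid.commute_coe_coe.symm

end Sign

variable [Fintype ι]

theorem swap_mem_unitaryGroup (i j : ι) : swap ℂ i j ∈ unitaryGroup ι ℂ := by
  rw [mem_unitaryGroup_iff, star_eq_conjTranspose, conjTranspose_swap, swap_mul_self]

section Centralizer

variable {p : ι → Prop} [DecidablePred p] {m : unitaryGroup ι ℂ}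

theorem isDiag_of_forall_commute_blockSign
    (hm : ∀ h, Commute (blockSign p) h → Commute m h) : (m : Matrix ι ι ℂ).IsDiag := by
  intro i j hij
  have hi : Commute (blockSign (· = i)) m :=
    (hm _ ((commute_blockSign_iff p _).2 (commute_signDiagonal_signDiagonal p _))).symm
  exact (commute_signDiagonal_iff _ _).1 ((commute_blockSign_iff _ _).1 hi) i j
    (by simpa using hij.symm)

theorem apply_self_eq_of_forall_commute_blockSign
    (hm : ∀ h, Commute (blockSign p) h → Commute m h)
    {i j : ι} (hij : p i ↔ p j) : m i i = m j j := by
  have hswap := (hm ⟨swap ℂ i j, swap_mem_unitaryGroup i j⟩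
    ((commute_blockSign_iff p _).2 (commute_signDiagonal_swap p hij))).eq
  simpa using congr($(congrArg Subtype.val hswap) i j)

theorem eq_diagonal_of_forall_commute_blockSign
    (hm : ∀ h, Commute (blockSign p) h → Commute m h)
    {i₀ j₀ : ι} (hi₀ : p i₀) (hj₀ : ¬ p j₀) :
    (m : Matrix ι ι ℂ) = diagonal fun i => if p i then m i₀ i₀ else m j₀ j₀ := by
  refine ((isDiag_iff_diagonal_diag _).1 (isDiag_of_forall_commute_blockSign hm)).symm.trans ?_
  congr 1
  funext i
  split_ifs with hi
  · exact apply_self_eq_of_forall_commute_blockSign hm (iff_of_true hi hi₀)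
  · exact apply_self_eq_of_forall_commute_blockSign hm (iff_of_false hi hj₀)

end Centralizer

theorem Matrix.UnitaryGroup.trace_conj {α : Type*} [CommRing α] [StarRing α]
    (g A : unitaryGroup ι α) :
    trace (g * A * g⁻¹ : unitaryGroup ι α).1 = trace A.1 := by
  rw [UnitaryGroup.mul_val, UnitaryGroup.mul_val, UnitaryGroup.inv_val, trace_mul_cycle,
    UnitaryGroup.star_mul_self, Matrix.one_mul]

section Normalizer

variable {p : ι → Prop} [DecidablePred p] {i₀ j₀ : ι}

theorem eq_blockSign_of_forall_commute_blockSign (hi₀ : p i₀) (hj₀ : ¬ p j₀)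
    (hcard : #{i | p i} ≠ #{i | ¬ p i}) {m : unitaryGroup ι ℂ}
    (hm : ∀ h, Commute (blockSign p) h → Commute m h) (hmm : m * m = 1)
    (htr : trace (m : Matrix ι ι ℂ) = trace (signDiagonal p)) : m = blockSign p := by
  have hdiag := eq_diagonal_of_forall_commute_blockSign hm hi₀ hj₀
  have hsq := congrArg Subtype.val hmm
  rw [UnitaryGroup.mul_val, hdiag, diagonal_mul_diagonal, UnitaryGroup.one_val, ← diagonal_one,
    diagonal_eq_diagonal_iff] at hsq
  rw [hdiag, trace_diagonal_ite, signDiagonal, trace_diagonal_ite] at htr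
  obtain ⟨ha, hb⟩ := eq_one_and_eq_neg_one_of_mul_add_mul_eq_sub
    (card_ne_zero.2 ⟨i₀, by simpa using hi₀⟩) (card_ne_zero.2 ⟨j₀, by simpa using hj₀⟩) hcard
    (by simpa [hi₀] using hsq i₀) (by simpa [hj₀] using hsq j₀) (by rw [htr]; ring)
  apply Subtype.ext
  rw [hdiag, ha, hb]
  rfl

theorem commute_blockSign_of_forall_commute_iff (hi₀ : p i₀) (hj₀ : ¬ p j₀)
    (hcard : #{i | p i} ≠ #{i | ¬ p i}) {g : unitaryGroup ι ℂ}
    (hg : ∀ h, Commute (blockSign p) h ↔ Commute (blockSign p) (g * h * g⁻¹)) :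
    Commute (blockSign p) g := by
  have hconj : g * blockSign p * g⁻¹ = blockSign p :=
    eq_blockSign_of_forall_commute_blockSign hi₀ hj₀ hcard
      (fun _ => commute_conj_of_forall_commute_iff hg)
      (by rw [conj_mul, blockSign_mul_self, mul_one, mul_inv_cancel])
      (UnitaryGroup.trace_conj g _)
  exact (mul_inv_eq_iff_eq_mul.1 hconj).symm

end Normalizer

theorem isBlockDiag_iff_commute_signDiagonal {n k : ℕ} (A : Matrix (Fin n) (Fin n) ℂ) :
    IsBlockDiag n k A ↔ Commute (signDiagonal fun i : Fin n => (i : ℕ) < k) A := by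
  rw [commute_signDiagonal_iff]
  refine forall₂_congr fun i j => imp_congr_left ?_
  omega

/-- For `1 ≤ k < n` with `2k ≠ n`, the subgroup `U(k) × U(n-k)` of block-diagonal
unitary matrices is self-normalizing in `U(n)`: `g` conjugates it onto itself iff
`g` itself is block diagonal. -/
theorem Uk_Unk_self_normalizing (n k : ℕ) (hk : 1 ≤ k) (hkn : k < n) (h2k : 2 * k ≠ n)
    (g : Matrix.unitaryGroup (Fin n) ℂ) :
    (∀ h : Matrix.unitaryGroup (Fin n) ℂ,
        IsBlockDiag n k (h : Matrix (Fin n) (Fin n) ℂ) ↔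
          IsBlockDiag n k ((g * h * g⁻¹ : Matrix.unitaryGroup (Fin n) ℂ) :
            Matrix (Fin n) (Fin n) ℂ)) ↔
      IsBlockDiag n k (g : Matrix (Fin n) (Fin n) ℂ) := by
  set p : Fin n → Prop := fun i => (i : ℕ) < k
  have hblock (h : unitaryGroup (Fin n) ℂ) : IsBlockDiag n k h ↔ Commute (blockSign p) h :=
    (isBlockDiag_iff_commute_signDiagonal _).trans (commute_blockSign_iff p h).symm
  have hcard : #{i | p i} ≠ #{i | ¬ p i} := by
    have hsum : #{i : Fin n | p i} + #{i | ¬ p i} = n := by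
      simpa using card_filter_add_card_filter_not (s := univ) fun i => p i
    have hlt : #{i : Fin n | p i} = k := by simpa [p, Fin.card_filter_val_lt] using hkn.le
    omega
  simp only [hblock]
  exact ⟨commute_blockSign_of_forall_commute_iff (i₀ := ⟨0, by omega⟩) (j₀ := ⟨k, hkn⟩)
    (show 0 < k by omega) (lt_irrefl k) hcard, commute_iff_commute_conj_of_commute⟩
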